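/- Consider the nested recursion exp(V(k)/μ(c(k))) = Σ_{a∈N(k)} exp((v(a|k) + V(a))/μ(c(k))) on the tiered Binary-Choice DAG, where the scale at node p^c_j depends only on the count c via μ(c) > 0, and on the Multi-Choice DAG with the same scale rule and same alternative order. Then for every node p^c_j present in both DAGs, the value functions coincide: V^BiC(p^c_j) = V^MuC(p^c_j). -/

import Mathlib

/-! Both exponentiated value functions are fixed points of the Multi-Choice Bellman operator:
for `zMuC` this is its definition, and for `zBiC` it follows by unrolling the reject arcs
`p^c_j → p^c_{j+1} → ⋯ → p^c_m`, whose select arcs are exactly the Multi-Choice arcs out of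
`p^c_j`. The operator defines the value at tier `j` from values at strictly later tiers,
so it has only one fixed point. -/

/-- Exponentiated nested value function on the Binary-Choice DAG:
`zB j c = exp(V^BiC(p^c_j) / μ c)`.  At tier `m` the terminal value is `1` if
`c ∈ [L,U]` and `0` (i.e. `V = -∞`) otherwise; for `j < m` the node `p^c_j`
has a reject arc to `p^c_{j+1}` (utility `0`) and a select arc to
`p^{c+1}_{j+1}` (utility `v (j+1)`), with node scale `μ c` depending only on
the count `c`. -/
noncomputable def zBiC (v μ : ℕ → ℝ) (L U m : ℕ) : ℕ → ℕ → ℝ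
  | j, c =>
    if h : j < m then
      zBiC v μ L U m (j + 1) c
        + Real.exp (v (j + 1) / μ c) * (zBiC v μ L U m (j + 1) (c + 1)) ^ (μ (c + 1) / μ c)
    else if L ≤ c ∧ c ≤ U then 1 else 0
  termination_by j _ => m - j
  decreasing_by all_goals omega

/-- Exponentiated nested value function on the Multi-Choice DAG:
`zMuC j c = exp(V^MuC(p^c_j) / μ c)`.  Node `p^c_j` has arcs to `p^{c+1}_{j'}`
(utility `v j'`) for `j < j' ≤ m`, plus a zero-utility arc to the destination
when `c ∈ [L,U]`; node scale `μ c` depends only on the count `c`. -/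
noncomputable def zMuC (v μ : ℕ → ℝ) (L U m : ℕ) : ℕ → ℕ → ℝ
  | j, c =>
    (∑ j' ∈ (Finset.Icc (j + 1) m).attach,
        Real.exp (v j'.1 / μ c) * (zMuC v μ L U m j'.1 (c + 1)) ^ (μ (c + 1) / μ c))
      + (if L ≤ c ∧ c ≤ U then 1 else 0)
  termination_by j _ => m - j
  decreasing_by
    all_goals
      have := Finset.mem_Icc.mp j'.2
      omega

open Finset

noncomputable def mucBellman (v μ : ℕ → ℝ) (L U m : ℕ) (z : ℕ → ℕ → ℝ) : ℕ → ℕ → ℝ :=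
  fun j c =>
    (∑ j' ∈ Icc (j + 1) m, Real.exp (v j' / μ c) * z j' (c + 1) ^ (μ (c + 1) / μ c))
      + if L ≤ c ∧ c ≤ U then 1 else 0

section

variable {v μ : ℕ → ℝ} {L U m : ℕ}

theorem eq_of_isFixedPt_mucBellman {z w : ℕ → ℕ → ℝ}
    (hz : Function.IsFixedPt (mucBellman v μ L U m) z)
    (hw : Function.IsFixedPt (mucBellman v μ L U m) w) (j c : ℕ) : z j c = w j c := by
  rw [← hz, ← hw]
  refine congrArg (· + _) (sum_congr rfl fun j' hj' => ?_)
  rw [eq_of_isFixedPt_mucBellman hz hw j' (c + 1)]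
termination_by m - j
decreasing_by have := mem_Icc.mp hj'; omega

theorem isFixedPt_mucBellman_zMuC :
    Function.IsFixedPt (mucBellman v μ L U m) (zMuC v μ L U m) := by
  funext j c
  rw [mucBellman, zMuC, ← sum_attach (Icc (j + 1) m)]

theorem zBiC_eq_mucBellman (j c : ℕ) :
    zBiC v μ L U m j c = mucBellman v μ L U m (zBiC v μ L U m) j c := by
  by_cases hjm : j < m
  · rw [zBiC, dif_pos hjm, zBiC_eq_mucBellman (j + 1) c, mucBellman, mucBellman,
      ← insert_Icc_add_one_left_eq_Icc (show j + 1 ≤ m by omega), sum_insert (by simp)]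
    ring
  · rw [zBiC, dif_neg hjm, mucBellman, Icc_eq_empty (by omega), sum_empty, zero_add]
termination_by m - j

theorem isFixedPt_mucBellman_zBiC :
    Function.IsFixedPt (mucBellman v μ L U m) (zBiC v μ L U m) :=
  funext₂ fun j c => (zBiC_eq_mucBellman j c).symm

end

theorem nested_values_BiC_eq_MuC_general (m L U : ℕ)
    (v μ : ℕ → ℝ) :
    ∀ j c : ℕ, j ≤ m → c ≤ j → c ≤ U → (1 ≤ c ∨ j = 0) →
      zBiC v μ L U m j c = zMuC v μ L U m j c := fun j c _ _ _ _ =>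
  eq_of_isFixedPt_mucBellman isFixedPt_mucBellman_zBiC isFixedPt_mucBellman_zMuC j c

/-- With the same alternative order and scale parameters depending only on the
count `c`, the nested recursive logit value functions on the Binary-Choice and
Multi-Choice DAGs coincide at every node `p^c_j` present in both DAGs. -/
theorem nested_values_BiC_eq_MuC (m L U : ℕ) (hL : 1 ≤ L) (hLU : L ≤ U) (hUm : U ≤ m)
    (v μ : ℕ → ℝ) (hμ : ∀ c, 0 < μ c) :
    ∀ j c : ℕ, j ≤ m → c ≤ j → c ≤ U → (1 ≤ c ∨ j = 0) →
      zBiC v μ L U m j c = zMuC v μ L U m j c :=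
  nested_values_BiC_eq_MuC_general m L U v μ
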